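/- Consider the MDP M with states {q₀, q₁, q₂}, initial state q₀, no outgoing transitions from q₁ and q₂, and two transitions μ₁, μ₂ out of q₀ with μ₁(q₁) = 3/4, μ₁(q₂) = 1/4 and μ₂(q₁) = 1/4, μ₂(q₂) = 3/4, where L(q₀) = ∅, L(q₁) = {P₁}, L(q₂) = {P₂}. Then M violates the safety formula ψ_S = P_{<3/4}(X(P₁ ∧ ¬P₂)) ∨ P_{<3/4}(X(¬P₁ ∧ P₂)), but no DTMC (an MDP whose transition function assigns exactly one sub-probability measure to each state) that is simulated by M violates ψ_S. -/

import Mathlib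

open Classical
attribute [local instance 10] Classical.propDecidable

noncomputable section

universe u v w

/-- A sub-probability measure on a finite set `Q`. -/
structure SubProb (Q : Type u) [Fintype Q] where
  val : Q → ℝ
  nonneg : ∀ q, 0 ≤ val q
  sum_le_one : ∑ q, val q ≤ 1

namespace SubProb

variable {Q : Type u} {Q' : Type v} [Fintype Q] [Fintype Q']

/-- The measure of a set of states. -/
def mass (μ : SubProb Q) (A : Set Q) : ℝ := ∑ q, A.indicator μ.val q

/-- The zero sub-probability measure. -/
def zero (Q : Type u) [Fintype Q] : SubProb Q :=
  ⟨fun _ => 0, fun _ => le_refl 0, by simp⟩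

/-- Extension (by zero) of a sub-probability measure to a disjoint sum (left). -/
def toLeft (μ : SubProb Q) : SubProb (Q ⊕ Q') where
  val := Sum.elim μ.val fun _ => 0
  nonneg := by rintro (q | q); exacts [μ.nonneg q, le_refl 0]
  sum_le_one := by simpa [Fintype.sum_sum_type] using μ.sum_le_one

/-- Extension (by zero) of a sub-probability measure to a disjoint sum (right). -/
def toRight (μ : SubProb Q') : SubProb (Q ⊕ Q') where
  val := Sum.elim (fun _ => 0) μ.val
  nonneg := by rintro (q | q); exacts [le_refl 0, μ.nonneg q]
  sum_le_one := by simpa [Fintype.sum_sum_type] using μ.sum_le_one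

end SubProb

/-- The image of a set under a binary relation. -/
def relImage {A : Type u} {B : Type v} (R : A → B → Prop) (S : Set A) : Set B :=
  {b | ∃ a ∈ S, R a b}

/-- A set is `R`-closed if its image under `R` is itself. -/
def RClosed {Q : Type u} (R : Q → Q → Prop) (A : Set Q) : Prop := relImage R A = A

/-- `μ ≼_R μ'` : `μ'` simulates `μ` with respect to `R`. -/
def SubProb.simLE {Q : Type u} [Fintype Q] (R : Q → Q → Prop) (μ μ' : SubProb Q) : Prop :=
  ∀ A : Set Q, RClosed R A → μ.mass A ≤ μ'.mass A

/-- `μ ≈_R μ'` : `μ` is equivalent to `μ'` with respect to `R`. -/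
def SubProb.simEq {Q : Type u} [Fintype Q] (R : Q → Q → Prop) (μ μ' : SubProb Q) : Prop :=
  ∀ A : Set Q, RClosed R A → μ.mass A = μ'.mass A

/-- A (finite) Markov decision process over atomic propositions `AP`. -/
structure MDP (Q : Type u) [Fintype Q] (AP : Type w) where
  init : Q
  trans : Q → Finset (SubProb Q)
  trans_nonempty : ∀ q, (trans q).Nonempty
  label : Q → Set AP

variable {Q : Type u} {Q' : Type v} {AP : Type w} [Fintype Q] [Fintype Q']

/-- A simulation relation on (the state space of) an MDP: a preorder such that related
states have the same labels and every transition of the smaller state is simulated. -/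
def IsSimulation (M : MDP Q AP) (R : Q → Q → Prop) : Prop :=
  Reflexive R ∧ Transitive R ∧
    ∀ q q', R q q' → M.label q = M.label q' ∧
      ∀ μ ∈ M.trans q, ∃ μ' ∈ M.trans q', SubProb.simLE R μ μ'

/-- A bisimulation on (the state space of) an MDP. -/
def IsBisimulation (M : MDP Q AP) (R : Q → Q → Prop) : Prop :=
  Equivalence R ∧
    ∀ q q', R q q' → M.label q = M.label q' ∧
      ∀ μ ∈ M.trans q, ∃ μ' ∈ M.trans q', SubProb.simEq R μ μ'

/-- The direct sum of two MDPs (with the initial state of the first as initial state). -/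
def MDP.dsum (M : MDP Q AP) (M' : MDP Q' AP) : MDP (Q ⊕ Q') AP where
  init := Sum.inl M.init
  trans := fun x =>
    match x with
    | .inl q => (M.trans q).image SubProb.toLeft
    | .inr q => (M'.trans q).image SubProb.toRight
  trans_nonempty := by
    rintro (q | q)
    · exact (M.trans_nonempty q).image _
    · exact (M'.trans_nonempty q).image _
  label := Sum.elim M.label M'.label

/-- `M ≼ M'` : the MDP `M'` simulates the MDP `M`. -/
def MDP.Sim (M : MDP Q AP) (M' : MDP Q' AP) : Prop :=
  ∃ R : (Q ⊕ Q') → (Q ⊕ Q') → Prop,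
    IsSimulation (M.dsum M') R ∧ R (Sum.inl M.init) (Sum.inr M'.init)

/-- `M ≈ M'` : the MDPs `M` and `M'` are bisimilar. -/
def MDP.Bisim (M : MDP Q AP) (M' : MDP Q' AP) : Prop :=
  ∃ R : (Q ⊕ Q') → (Q ⊕ Q') → Prop,
    IsBisimulation (M.dsum M') R ∧ R (Sum.inl M.init) (Sum.inr M'.init)

/-- The canonical-form relation `id_Q ∪ R₁ ∪ id_{Q'}` on a disjoint sum. -/
def canonRel (R₁ : Q → Q' → Prop) : (Q ⊕ Q') → (Q ⊕ Q') → Prop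
  | .inl a, .inl b => a = b
  | .inl a, .inr b => R₁ a b
  | .inr _, .inl _ => False
  | .inr a, .inr b => a = b

/-- `R₁ ⊆ Q × Q'` is a canonical simulation of `M` by `M'`. -/
def IsCanonSim (M : MDP Q AP) (M' : MDP Q' AP) (R₁ : Q → Q' → Prop) : Prop :=
  IsSimulation (M.dsum M') (canonRel R₁)

/-- The edge relation of the unlabeled underlying graph of an MDP. -/
def MDP.edge (M : MDP Q AP) (q₁ q₂ : Q) : Prop :=
  ∃ μ ∈ M.trans q₁, 0 < μ.val q₂

/-- A sub-probability measure on `Q` viewed as a measure on `Q × Fin (k+1)`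
concentrated on level `j`. -/
def SubProb.toLevel {k : ℕ} (μ : SubProb Q) (j : Fin (k + 1)) : SubProb (Q × Fin (k + 1)) where
  val := fun x => if x.2 = j then μ.val x.1 else 0
  nonneg := by
    intro x; split
    · exact μ.nonneg x.1
    · exact le_refl 0
  sum_le_one := by
    rw [Fintype.sum_prod_type]
    simpa using μ.sum_le_one

/-- The `k`-th unrolling of an MDP rooted at `q`. States at level `j+1` transition to the
corresponding states at level `j`; states at level `0` have only the zero transition. -/
def MDP.unroll (M : MDP Q AP) (q : Q) (k : ℕ) : MDP (Q × Fin (k + 1)) AP where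
  init := (q, Fin.last k)
  trans := fun x =>
    if h : (x.2 : ℕ) = 0 then {SubProb.zero _}
    else (M.trans x.1).image fun μ =>
      μ.toLevel ⟨(x.2 : ℕ) - 1, Nat.lt_of_le_of_lt (Nat.sub_le _ _) x.2.isLt⟩
  trans_nonempty := by
    intro x; split
    · simp
    · exact (M.trans_nonempty x.1).image _
  label := fun x => M.label x.1
mutual
/-- The safety fragment of PCTL. -/
inductive SafeF (AP : Type w) : Type w
  | tt : SafeF AP
  | ff : SafeF AP
  | atom : AP → SafeF AP
  | natom : AP → SafeF AP
  | and : SafeF AP → SafeF AP → SafeF AP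
  | or : SafeF AP → SafeF AP → SafeF AP
  | pnextLt : (p : ℚ) → 0 ≤ p → p ≤ 1 → LiveF AP → SafeF AP
  | pnextLe : (p : ℚ) → 0 ≤ p → p ≤ 1 → LiveF AP → SafeF AP
  | puntilLt : (p : ℚ) → 0 ≤ p → p ≤ 1 → LiveF AP → LiveF AP → SafeF AP
  | puntilLe : (p : ℚ) → 0 ≤ p → p ≤ 1 → LiveF AP → LiveF AP → SafeF AP

/-- The liveness fragment of PCTL. -/
inductive LiveF (AP : Type w) : Type w
  | tt : LiveF AP
  | ff : LiveF AP
  | atom : AP → LiveF AP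
  | natom : AP → LiveF AP
  | and : LiveF AP → LiveF AP → LiveF AP
  | or : LiveF AP → LiveF AP → LiveF AP
  | nnextLt : (p : ℚ) → 0 ≤ p → p ≤ 1 → LiveF AP → LiveF AP
  | nnextLe : (p : ℚ) → 0 ≤ p → p ≤ 1 → LiveF AP → LiveF AP
  | nuntilLt : (p : ℚ) → 0 ≤ p → p ≤ 1 → LiveF AP → LiveF AP → LiveF AP
  | nuntilLe : (p : ℚ) → 0 ≤ p → p ≤ 1 → LiveF AP → LiveF AP → LiveF AP
end

/-- A (history-dependent) scheduler for an MDP. -/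
structure Sched (M : MDP Q AP) where
  choice : List Q → Q → SubProb Q
  valid : ∀ h q, choice h q ∈ M.trans q

/-- The probability, under scheduler `σ` with current history `h`, that an until property
`s1 U s2` is satisfied from `q` within `n` steps. -/
def untilProbN (M : MDP Q AP) (σ : Sched M) (s1 s2 : Set Q) : ℕ → List Q → Q → ℝ
  | 0, _, q => if q ∈ s2 then 1 else 0
  | n + 1, h, q =>
    if q ∈ s2 then 1
    else if q ∈ s1 then
      ∑ q', (σ.choice h q).val q' * untilProbN M σ s1 s2 n (h ++ [q]) q'
    else 0

/-- The probability under scheduler `σ` that `s1 U s2` is satisfied from `q`. -/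
def untilProb (M : MDP Q AP) (σ : Sched M) (s1 s2 : Set Q) (q : Q) : ℝ :=
  ⨆ n : ℕ, untilProbN M σ s1 s2 n [] q

mutual
/-- Satisfaction of safety formulas at a state of an MDP (under all schedulers). -/
def satS (M : MDP Q AP) : SafeF AP → Q → Prop
  | .tt, _ => True
  | .ff, _ => False
  | .atom a, q => a ∈ M.label q
  | .natom a, q => a ∉ M.label q
  | .and φ ψ, q => satS M φ q ∧ satS M ψ q
  | .or φ ψ, q => satS M φ q ∨ satS M ψ q
  | .pnextLt p _ _ ψ, q => ∀ μ ∈ M.trans q, μ.mass {q' | satL M ψ q'} < (p : ℝ)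
  | .pnextLe p _ _ ψ, q => ∀ μ ∈ M.trans q, μ.mass {q' | satL M ψ q'} ≤ (p : ℝ)
  | .puntilLt p _ _ ψ1 ψ2, q =>
    ∀ σ : Sched M, untilProb M σ {q' | satL M ψ1 q'} {q' | satL M ψ2 q'} q < (p : ℝ)
  | .puntilLe p _ _ ψ1 ψ2, q =>
    ∀ σ : Sched M, untilProb M σ {q' | satL M ψ1 q'} {q' | satL M ψ2 q'} q ≤ (p : ℝ)

/-- Satisfaction of liveness formulas at a state of an MDP. -/
def satL (M : MDP Q AP) : LiveF AP → Q → Prop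
  | .tt, _ => True
  | .ff, _ => False
  | .atom a, q => a ∈ M.label q
  | .natom a, q => a ∉ M.label q
  | .and φ ψ, q => satL M φ q ∧ satL M ψ q
  | .or φ ψ, q => satL M φ q ∨ satL M ψ q
  | .nnextLt p _ _ ψ, q => ¬ ∀ μ ∈ M.trans q, μ.mass {q' | satL M ψ q'} < (p : ℝ)
  | .nnextLe p _ _ ψ, q => ¬ ∀ μ ∈ M.trans q, μ.mass {q' | satL M ψ q'} ≤ (p : ℝ)
  | .nuntilLt p _ _ ψ1 ψ2, q =>
    ¬ ∀ σ : Sched M, untilProb M σ {q' | satL M ψ1 q'} {q' | satL M ψ2 q'} q < (p : ℝ)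
  | .nuntilLe p _ _ ψ1 ψ2, q =>
    ¬ ∀ σ : Sched M, untilProb M σ {q' | satL M ψ1 q'} {q' | satL M ψ2 q'} q ≤ (p : ℝ)
end
mutual
/-- Weak safety formulas: safety formulas using only `≤` probability bounds. -/
def SafeF.weak : SafeF AP → Prop
  | .tt => True
  | .ff => True
  | .atom _ => True
  | .natom _ => True
  | .and φ ψ => φ.weak ∧ ψ.weak
  | .or φ ψ => φ.weak ∧ ψ.weak
  | .pnextLt _ _ _ _ => False
  | .pnextLe _ _ _ ψ => ψ.strict
  | .puntilLt _ _ _ _ _ => False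
  | .puntilLe _ _ _ ψ1 ψ2 => ψ1.strict ∧ ψ2.strict

/-- Strict liveness formulas: liveness formulas using only `≤` probability bounds. -/
def LiveF.strict : LiveF AP → Prop
  | .tt => True
  | .ff => True
  | .atom _ => True
  | .natom _ => True
  | .and φ ψ => φ.strict ∧ ψ.strict
  | .or φ ψ => φ.strict ∧ ψ.strict
  | .nnextLt _ _ _ _ => False
  | .nnextLe _ _ _ ψ => ψ.strict
  | .nuntilLt _ _ _ _ _ => False
  | .nuntilLe _ _ _ ψ1 ψ2 => ψ1.strict ∧ ψ2.strict
end

/-- An equivalence relation is compatible with an MDP if related states have equal labels. -/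
def Compatible (M : MDP Q AP) (s : Setoid Q) : Prop :=
  ∀ q q', s.r q q' → M.label q = M.label q'

/-- The lifting of a sub-probability measure to the quotient:
`[μ]([q]) = μ([q])`. -/
def SubProb.lift (s : Setoid Q) (μ : SubProb Q) : SubProb (Quotient s) where
  val := fun a => ∑ q, if Quotient.mk s q = a then μ.val q else 0
  nonneg := by
    intro a
    apply Finset.sum_nonneg
    intro q _
    split
    · exact μ.nonneg q
    · exact le_refl 0
  sum_le_one := by
    rw [Finset.sum_comm]
    simpa using μ.sum_le_one

/-- The abstract MDP of `M` with respect to an equivalence relation `s`. -/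
def MDP.abst (M : MDP Q AP) (s : Setoid Q) : MDP (Quotient s) AP where
  init := Quotient.mk s M.init
  trans := fun a =>
    Finset.univ.biUnion fun q =>
      if Quotient.mk s q = a then (M.trans q).image (SubProb.lift s) else ∅
  trans_nonempty := by
    intro a
    obtain ⟨q, rfl⟩ := Quotient.exists_rep a
    obtain ⟨μ, hμ⟩ := M.trans_nonempty q
    refine ⟨SubProb.lift s μ, Finset.mem_biUnion.2 ⟨q, Finset.mem_univ q, ?_⟩⟩
    rw [if_pos rfl]
    exact Finset.mem_image_of_mem _ hμ
  label := fun a => M.label a.out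

/-- The abstraction relation `{(q, [q])}`. -/
def abstRel (s : Setoid Q) : Q → Quotient s → Prop := fun q a => Quotient.mk s q = a

/-- The refinement relation for `s' ⊆ s`: `[q]_{s'}` is related to `[q]_s` iff
`[q]_{s'} ⊆ [q]_s`, equivalently they share a common element. -/
def refineRel (s' s : Setoid Q) : Quotient s' → Quotient s → Prop := fun a' a =>
  ∃ q : Q, Quotient.mk s' q = a' ∧ Quotient.mk s q = a

/-- `(E, R)` is a counterexample for the MDP `A` and safety formula `ψ`. -/
def IsCex {QA : Type v} [Fintype QA] (A : MDP QA AP) (ψ : SafeF AP) (E : MDP Q AP)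
    (R : Q → QA → Prop) : Prop :=
  ¬ satS E ψ E.init ∧ IsCanonSim E A R

/-- Containment of MDPs (on a common state space): same initial state, same labels, and
each transition set injects into the corresponding one so that each transition agrees with
its image except possibly being zero. -/
def MDPContained (M' M : MDP Q AP) : Prop :=
  M'.init = M.init ∧ (∀ q, M'.label q = M.label q) ∧
    ∀ q, ∃ f : SubProb Q → SubProb Q, Set.InjOn f (M'.trans q) ∧
      ∀ μ' ∈ M'.trans q, f μ' ∈ M.trans q ∧ ∀ q'', μ'.val q'' = (f μ').val q'' ∨ μ'.val q'' = 0

/-- A minimal counterexample. -/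
def MinimalCex {QA : Type v} [Fintype QA] (A : MDP QA AP) (ψ : SafeF AP) (E : MDP Q AP)
    (R₀ : Q → QA → Prop) : Prop :=
  IsCex A ψ E R₀ ∧
    (∀ (E₁ : MDP Q AP) (R₁ : Q → QA → Prop),
      IsCex A ψ E₁ R₁ → MDPContained E₁ E → E₁ = E) ∧
    (∀ R₁ : Q → QA → Prop,
      IsCex A ψ E R₁ → (∀ e a, R₁ e a → R₀ e a) → R₁ = R₀)

/-- The counterexample `(E, R₀)` for the abstraction `M/s` is valid and consistent with
`(M, s)`: there is a canonical (validating) simulation `R` of `E` by `M` with `α∘R ⊆ R₀`. -/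
def ValidConsistent (M : MDP Q AP) (s : Setoid Q) {QE : Type v} [Fintype QE] (E : MDP QE AP)
    (R₀ : QE → Quotient s → Prop) : Prop :=
  ∃ R : QE → Q → Prop, IsCanonSim E M R ∧ ∀ e q, R e q → R₀ e (Quotient.mk s q)

/-- The underlying graph of an MDP is a tree rooted at `r`. -/
def IsTreeGraph {V : Type u} (E : V → V → Prop) (r : V) : Prop :=
  (∀ q, ¬ E q r) ∧ (∀ q, q ≠ r → ∃! p, E p q) ∧ ∀ q, Relation.ReflTransGen E r q

/-- The first transition out of `q₀`: probability `3/4` to `q₁` and `1/4` to `q₂`. -/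
def mu1 : SubProb (Fin 3) where
  val := fun q => if q = 1 then 3/4 else if q = 2 then 1/4 else 0
  nonneg := by intro q; split_ifs <;> norm_num
  sum_le_one := by
    rw [Fin.sum_univ_three]
    norm_num [Fin.ext_iff]

/-- The second transition out of `q₀`: probability `1/4` to `q₁` and `3/4` to `q₂`. -/
def mu2 : SubProb (Fin 3) where
  val := fun q => if q = 1 then 1/4 else if q = 2 then 3/4 else 0
  nonneg := by intro q; split_ifs <;> norm_num
  sum_le_one := by
    rw [Fin.sum_univ_three]
    norm_num [Fin.ext_iff]

/-- The MDP `M` with states `q₀, q₁, q₂`, two transitions `μ₁, μ₂` out of `q₀`, no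
transitions out of `q₁, q₂`, and labels `L q₀ = ∅`, `L q₁ = {P₁}`, `L q₂ = {P₂}`. -/
def Mex : MDP (Fin 3) (Fin 2) where
  init := 0
  trans := fun q => if q = 0 then {mu1, mu2} else {SubProb.zero _}
  trans_nonempty := by
    intro q; split
    · exact Finset.insert_nonempty _ _
    · exact Finset.singleton_nonempty _
  label := fun q => if q = 1 then {0} else if q = 2 then {1} else (∅ : Set (Fin 2))

/-- The safety formula `P_{<3/4}(X(P₁ ∧ ¬P₂)) ∨ P_{<3/4}(X(¬P₁ ∧ P₂))`. -/
def psiSex : SafeF (Fin 2) :=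
  .or (.pnextLt (3/4) (by norm_num) (by norm_num) (.and (.atom 0) (.natom 1)))
      (.pnextLt (3/4) (by norm_num) (by norm_num) (.and (.natom 0) (.atom 1)))

/-!
Choosing `μ₁` refutes the first disjunct of `ψ_S` and choosing `μ₂` the second. A DTMC `D`
simulated by `M` has a single initial transition `ν`, matched by `μ₁` or `μ₂`. Sets of states
defined by their labels are closed under every simulation, so `ν` gives the states labelled
`¬P₁ ∧ P₂` (resp. `P₁ ∧ ¬P₂`) at most the mass `1/4` that `μ₁` (resp. `μ₂`) gives them, and
`D` satisfies the corresponding disjunct.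
-/

namespace SubProb

variable {Q : Type u} {Q' : Type v} [Fintype Q] [Fintype Q']

lemma mass_singleton (μ : SubProb Q) (q : Q) : μ.mass {q} = μ.val q := by
  simp [mass, Set.indicator_apply]

lemma mass_toLeft (μ : SubProb Q) (A : Set (Q ⊕ Q')) :
    (μ.toLeft : SubProb (Q ⊕ Q')).mass A = μ.mass (Sum.inl ⁻¹' A) := by
  simp [mass, toLeft, Fintype.sum_sum_type, Set.indicator_apply]

lemma mass_toRight (μ : SubProb Q') (A : Set (Q ⊕ Q')) :
    (μ.toRight : SubProb (Q ⊕ Q')).mass A = μ.mass (Sum.inr ⁻¹' A) := by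
  simp [mass, toRight, Fintype.sum_sum_type, Set.indicator_apply]

end SubProb

lemma IsSimulation.rClosed_setOf_label {M : MDP Q AP} {R : Q → Q → Prop}
    (h : IsSimulation M R) (P : Set AP → Prop) : RClosed R {q | P (M.label q)} := by
  obtain ⟨hrefl, -, hmatch⟩ := h
  ext q
  constructor
  · rintro ⟨p, hp, hpq⟩
    simpa [← (hmatch p q hpq).1] using hp
  · exact fun hq => ⟨q, hq, hrefl q⟩

lemma MDP.Sim.exists_trans_init_mass_label_le {M : MDP Q AP} {M' : MDP Q' AP} (h : M.Sim M')
    {ν : SubProb Q} (hν : ν ∈ M.trans M.init) :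
    ∃ μ ∈ M'.trans M'.init, ∀ P : Set AP → Prop,
      ν.mass {q | P (M.label q)} ≤ μ.mass {q | P (M'.label q)} := by
  obtain ⟨R, hR, hinit⟩ := h
  obtain ⟨μ', hμ', hle⟩ := (hR.2.2 _ _ hinit).2 ν.toLeft (Finset.mem_image_of_mem _ hν)
  obtain ⟨μ, hμ, rfl⟩ := Finset.mem_image.mp hμ'
  refine ⟨μ, hμ, fun P => ?_⟩
  simpa [SubProb.mass_toLeft, SubProb.mass_toRight, MDP.dsum]
    using hle _ (hR.rClosed_setOf_label P)

lemma satS_pnextLt_of_trans_eq_singleton {M : MDP Q AP} {q : Q} {ν : SubProb Q}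
    (hq : M.trans q = {ν}) {p : ℚ} (hp₀ : 0 ≤ p) (hp₁ : p ≤ 1) {φ : LiveF AP}
    (hν : ν.mass {q' | satL M φ q'} < p) : satS M (.pnextLt p hp₀ hp₁ φ) q := by
  simpa [satS, hq] using hν

lemma Mex_trans_init : Mex.trans Mex.init = {mu1, mu2} := rfl

lemma setOf_Mex_label_P₁_only : {q | 0 ∈ Mex.label q ∧ 1 ∉ Mex.label q} = {1} := by
  ext q; fin_cases q <;> simp [Mex]

lemma setOf_Mex_label_P₂_only : {q | 1 ∈ Mex.label q ∧ 0 ∉ Mex.label q} = {2} := by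
  ext q; fin_cases q <;> simp [Mex]

lemma not_satS_Mex_psiSex : ¬ satS Mex psiSex Mex.init := by
  rintro (h | h)
  · have := h mu1 (by simp [Mex_trans_init])
    simp only [satL] at this
    norm_num [setOf_Mex_label_P₁_only, SubProb.mass_singleton, mu1] at this
  · have := h mu2 (by simp [Mex_trans_init])
    simp only [satL, and_comm (a := _ ∉ _)] at this
    norm_num [setOf_Mex_label_P₂_only, SubProb.mass_singleton, mu2,
      show (2 : Fin 3) ≠ 1 by decide] at this

lemma satS_psiSex_of_sim_Mex {Q' : Type u} [Fintype Q'] {D : MDP Q' (Fin 2)}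
    (hD : (D.trans D.init).card = 1) (hsim : D.Sim Mex) : satS D psiSex D.init := by
  obtain ⟨ν, hν⟩ := Finset.card_eq_one.mp hD
  obtain ⟨μ, hμ, hle⟩ := hsim.exists_trans_init_mass_label_le (hν ▸ Finset.mem_singleton_self ν)
  have hP₁ := hle fun l => 0 ∈ l ∧ 1 ∉ l
  have hP₂ := hle fun l => 1 ∈ l ∧ 0 ∉ l
  simp only [setOf_Mex_label_P₁_only, setOf_Mex_label_P₂_only, SubProb.mass_singleton] at hP₁ hP₂
  rw [Mex_trans_init, Finset.mem_insert, Finset.mem_singleton] at hμ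
  rcases hμ with rfl | rfl
  · refine .inr (satS_pnextLt_of_trans_eq_singleton hν _ _ ?_)
    simp only [satL, and_comm (a := _ ∉ _)]
    exact hP₂.trans_lt (by norm_num [mu1, show (2 : Fin 3) ≠ 1 by decide])
  · refine .inl (satS_pnextLt_of_trans_eq_singleton hν _ _ ?_)
    simp only [satL]
    exact hP₁.trans_lt (by norm_num [mu2])

/-- `Mex` violates `psiSex`, but every DTMC (an MDP with exactly one transition per state)
simulated by `Mex` satisfies `psiSex`; i.e., no DTMC simulated by `Mex` violates it. -/
theorem stmt9 :
    ¬ satS Mex psiSex Mex.init ∧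
    ∀ (Q' : Type) [Fintype Q'] (D : MDP Q' (Fin 2)),
      (∀ q : Q', (D.trans q).card = 1) → MDP.Sim D Mex →
      satS D psiSex D.init :=
  ⟨not_satS_Mex_psiSex, fun _ _ _ hD hsim => satS_psiSex_of_sim_Mex (hD _) hsim⟩
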